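/- Given a satisfying assignment of the CNF from the previous statement, setting D = {v_i : V_{i,3} = true}, A = {v_i : V_{i,1} = true}, and B = {v_i : v_i ∉ D ∪ A}, the graph G[V \ D] is bipartite with bipartition classes A \ D and B. -/

import Mathlib

def IsIndep {V : Type*} (G : SimpleGraph V) (S : Set V) : Prop :=
  ∀ u ∈ S, ∀ v ∈ S, ¬ G.Adj u v

/-- `A`, `B` form a bipartition of the induced subgraph `G[X]`. -/
def BipartitionOn {V : Type*} (G : SimpleGraph V) (X A B : Set V) : Prop :=
  A ∪ B = X ∧ Disjoint A B ∧ IsIndep G A ∧ IsIndep G B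

def BipartiteOn {V : Type*} (G : SimpleGraph V) (X : Set V) : Prop :=
  ∃ A B : Set V, BipartitionOn G X A B

/-! The edge clauses for the first variable make `A` independent, and those for the second
variable make `{v | V_{v,2}}` independent; by the vertex clause `V_{i,1} ∨ V_{i,2} ∨ V_{i,3}`
every vertex outside `D ∪ A` lies in the latter set. The two classes split `V \ D` according
to membership in `A`. -/

section

variable {V : Type*} {G : SimpleGraph V}

theorem IsIndep.mono {S T : Set V} (hT : IsIndep G T) (hST : S ⊆ T) : IsIndep G S :=
  fun u hu v hv => hT u (hST hu) v (hST hv)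

theorem isIndep_setOf_of_adj {p : V → Bool}
    (hp : ∀ u v : V, G.Adj u v → (p u = false ∨ p v = false)) :
    IsIndep G {v | p v = true} := by
  intro u hu v hv hadj
  rcases hp u v hadj with h | h <;> simp_all

theorem Set.diff_union_compl_union (D A : Set V) : A \ D ∪ (D ∪ A)ᶜ = Dᶜ := by
  ext v
  by_cases hA : v ∈ A <;> simp [hA]

theorem Set.disjoint_diff_compl_union (D A : Set V) : Disjoint (A \ D) (D ∪ A)ᶜ :=
  disjoint_compl_right.mono_left (Set.sdiff_subset.trans Set.subset_union_right)

theorem bipartitionOn_compl_of_isIndep {D A : Set V} (hA : IsIndep G (A \ D))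
    (hB : IsIndep G (D ∪ A)ᶜ) : BipartitionOn G Dᶜ (A \ D) (D ∪ A)ᶜ :=
  ⟨Set.diff_union_compl_union D A, Set.disjoint_diff_compl_union D A, hA, hB⟩

end

theorem stmt_8_general {V : Type*} (G : SimpleGraph V) (a : V → Fin 3 → Bool)
    (h1 : ∀ v : V, a v 0 = true ∨ a v 1 = true ∨ a v 2 = true)
    (h2 : ∀ u v : V, G.Adj u v → (a u 0 = false ∨ a v 0 = false))
    (h3 : ∀ u v : V, G.Adj u v → (a u 1 = false ∨ a v 1 = false)) :
    BipartitionOn G ({v : V | a v 2 = true})ᶜ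
      ({v : V | a v 0 = true} \ {v : V | a v 2 = true})
      {v : V | v ∉ ({v : V | a v 2 = true} ∪ {v : V | a v 0 = true})} := by
  have hB : {v : V | v ∉ ({v : V | a v 2 = true} ∪ {v : V | a v 0 = true})} ⊆
      {v | a v 1 = true} := by
    intro v hv
    simp only [Set.mem_ofPred_eq, Set.mem_union, not_or] at hv
    exact (h1 v).resolve_left hv.2 |>.resolve_right hv.1
  exact bipartitionOn_compl_of_isIndep ((isIndep_setOf_of_adj h2).mono Set.sdiff_subset)
    ((isIndep_setOf_of_adj h3).mono hB)

/-- From a satisfying assignment of the CNF, setting `D = {v | a v 2}`, `A = {v | a v 0}`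
and `B = {v | v ∉ D ∪ A}`, the graph `G[V \ D]` is bipartite with classes `A \ D` and `B`. -/
theorem stmt_8 {V : Type*} [Fintype V] (G : SimpleGraph V) (a : V → Fin 3 → Bool)
    (h1 : ∀ v : V, a v 0 = true ∨ a v 1 = true ∨ a v 2 = true)
    (h2 : ∀ u v : V, G.Adj u v → (a u 0 = false ∨ a v 0 = false))
    (h3 : ∀ u v : V, G.Adj u v → (a u 1 = false ∨ a v 1 = false)) :
    BipartitionOn G ({v : V | a v 2 = true})ᶜ
      ({v : V | a v 0 = true} \ {v : V | a v 2 = true})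
      {v : V | v ∉ ({v : V | a v 2 = true} ∪ {v : V | a v 0 = true})} :=
  stmt_8_general G a h1 h2 h3
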